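/- arXiv:1110.1674 — 2 statements merged into one kernel-verified Lean document; each statement's English description precedes it below -/
import Mathlib

section
/- Define f_i = Coef_m[(1 - z x_i)^{-1}·∏_{j=1}^n (1 - z x_j)^{m/n}] for i = 1,...,n. Then ∑_{i=1}^n f_i = 0. -/
/-!
The binomial series `g_x = (1 - x z)^α` satisfies `(1 - x z) g_x' = -α x g_x`, that is,
`z g_x' = α (g_x - g_x / (1 - x z))`. Taking the logarithmic derivative of `F = ∏_j g_{x_j}`
gives `z F' = α (n F - ∑_i F / (1 - x_i z))`, and comparing the coefficients of `z^m` yields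
`m v_m = α (n v_m - ∑_i f_i)`. For `α = m / n` this leaves `α ∑_i f_i = 0`.
-/

open PowerSeries

/-- Generalized binomial coefficient `C(α, j) = α(α-1)⋯(α-j+1)/j!`. -/
noncomputable def gbinom (α : ℚ) (j : ℕ) : ℚ :=
  (∏ i ∈ Finset.range j, (α - i)) / (j.factorial : ℚ)

/-- The binomial series `(1 + w)^α = ∑_j C(α,j) w^j`, for a power series `w`
(intended to have zero constant term, so that each coefficient is a finite sum). -/
noncomputable def fpow {R : Type*} [CommRing R] [Algebra ℚ R]
    (w : PowerSeries R) (α : ℚ) : PowerSeries R :=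
  PowerSeries.mk fun k => ∑ j ∈ Finset.range (k + 1),
    gbinom α j • (PowerSeries.coeff k (w ^ j))

theorem gbinom_succ (α : ℚ) (k : ℕ) :
    ((k : ℚ) + 1) * gbinom α (k + 1) = (α - k) * gbinom α k := by
  have : (k.factorial : ℚ) ≠ 0 := Nat.cast_ne_zero.mpr k.factorial_ne_zero
  rw [gbinom, gbinom, Finset.prod_range_succ, Nat.factorial_succ]
  push_cast
  field_simp

theorem Derivation.leibniz_prod {R A M : Type*} [CommSemiring R] [CommSemiring A]
    [AddCommMonoid M] [Algebra R A] [Module A M] [Module R M] (D : Derivation R A M)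
    {ι : Type*} [DecidableEq ι] (s : Finset ι) (g : ι → A) :
    D (∏ i ∈ s, g i) = ∑ i ∈ s, (∏ j ∈ s.erase i, g j) • D (g i) := by
  induction s using Finset.induction_on with
  | empty => simp
  | @insert a s ha ih =>
    rw [Finset.prod_insert ha, D.leibniz, ih, Finset.sum_insert ha, Finset.erase_insert ha,
      Finset.smul_sum, add_comm]
    congr 1
    refine Finset.sum_congr rfl fun i hi => ?_
    rw [Finset.erase_insert_of_ne (ne_of_mem_of_not_mem hi ha).symm,
      Finset.prod_insert fun h => ha (Finset.mem_of_mem_erase h), mul_smul]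

namespace PowerSeries

theorem coeff_X_mul_derivative {R : Type*} [CommSemiring R] (f : R⟦X⟧) (k : ℕ) :
    coeff k (X * d⁄dX R f) = k * coeff k f := by
  cases k with
  | zero => simp
  | succ k => rw [coeff_succ_X_mul, coeff_derivative, mul_comm, Nat.cast_succ]

section BinomialSeries

variable {R : Type*} [CommRing R] [Algebra ℚ R]

theorem coeff_fpow_C_mul_X (a : R) (α : ℚ) (k : ℕ) :
    coeff k (fpow (C a * X) α) = gbinom α k • a ^ k := by
  rw [fpow, coeff_mk, Finset.sum_eq_single_of_mem k (Finset.self_mem_range_succ k)]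
  · rw [mul_pow, ← map_pow, coeff_C_mul_X_pow, if_pos rfl]
  · intro j _ hjk
    rw [mul_pow, ← map_pow, coeff_C_mul_X_pow, if_neg (Ne.symm hjk), smul_zero]

theorem one_add_C_mul_X_mul_derivative_fpow (a : R) (α : ℚ) :
    (1 + C a * X) * d⁄dX R (fpow (C a * X) α) = α • (C a * fpow (C a * X) α) := by
  ext k
  have hrec := congrArg (algebraMap ℚ R) (gbinom_succ α k)
  simp only [map_mul, map_add, map_sub, map_natCast, map_one] at hrec
  rw [add_mul, one_mul, mul_assoc, map_add, coeff_C_mul, coeff_X_mul_derivative,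
    coeff_derivative, coeff_smul, coeff_C_mul, coeff_fpow_C_mul_X, coeff_fpow_C_mul_X]
  simp only [Algebra.smul_def, pow_succ]
  linear_combination a ^ k * a * hrec

theorem X_mul_derivative_fpow (x : R) (α : ℚ) :
    X * d⁄dX R (fpow (-(C x * X)) α) =
      α • (fpow (-(C x * X)) α - invOfUnit (1 - C x * X) 1 * fpow (-(C x * X)) α) := by
  have hneg : -(C x * X) = C (-x) * X := by rw [map_neg, neg_mul]
  have hinv : (1 - C x * X) * invOfUnit (1 - C x * X) 1 = 1 :=
    mul_invOfUnit _ _ (by simp)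
  have hode := one_add_C_mul_X_mul_derivative_fpow (-x) α
  rw [← hneg, ← sub_eq_add_neg, map_neg] at hode
  rw [Algebra.smul_def] at hode ⊢
  linear_combination (X * invOfUnit (1 - C x * X) 1) * hode +
    (algebraMap ℚ R⟦X⟧ α * fpow (-(C x * X)) α - X * d⁄dX R (fpow (-(C x * X)) α)) * hinv

theorem X_mul_derivative_prod_fpow {ι : Type*} [Fintype ι] (x : ι → R) (α : ℚ) :
    X * d⁄dX R (∏ i, fpow (-(C (x i) * X)) α) =
      α • (Fintype.card ι • ∏ i, fpow (-(C (x i) * X)) α -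
        ∑ i, invOfUnit (1 - C (x i) * X) 1 * ∏ j, fpow (-(C (x j) * X)) α) := by
  classical
  have hterm : ∀ i, X * ((∏ j ∈ Finset.univ.erase i, fpow (-(C (x j) * X)) α) •
      d⁄dX R (fpow (-(C (x i) * X)) α)) = α • (∏ j, fpow (-(C (x j) * X)) α -
        invOfUnit (1 - C (x i) * X) 1 * ∏ j, fpow (-(C (x j) * X)) α) := by
    intro i
    rw [smul_eq_mul, mul_left_comm, X_mul_derivative_fpow, mul_smul_comm,
      ← Finset.prod_erase_mul _ _ (Finset.mem_univ i)]
    congr 1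
    ring
  rw [Derivation.leibniz_prod, Finset.mul_sum, Finset.sum_congr rfl fun i _ => hterm i,
    ← Finset.smul_sum, Finset.sum_sub_distrib, Finset.sum_const, Finset.card_univ]

theorem sum_coeff_invOfUnit_mul_prod_fpow {ι : Type*} [Fintype ι] (x : ι → R) {α : ℚ} {m : ℕ}
    (hm : m ≠ 0) (hα : (Fintype.card ι : ℚ) * α = m) :
    ∑ i, coeff m (invOfUnit (1 - C (x i) * X) 1 * ∏ j, fpow (-(C (x j) * X)) α) = 0 := by
  set v := coeff m (∏ j, fpow (-(C (x j) * X)) α)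
  have hαne : α ≠ 0 := by
    rintro rfl
    rw [mul_zero] at hα
    exact hm (by exact_mod_cast hα.symm)
  have hcard : α • (Fintype.card ι • v) = m * v := by
    rw [← Nat.cast_smul_eq_nsmul ℚ, smul_smul, mul_comm, hα, Nat.cast_smul_eq_nsmul, nsmul_eq_mul]
  have h := congrArg (coeff m) (X_mul_derivative_prod_fpow x α)
  rw [coeff_X_mul_derivative, coeff_smul, map_sub, map_nsmul, map_sum, smul_sub, hcard] at h
  exact (smul_eq_zero.mp (sub_eq_self.mp h.symm)).resolve_left hαne

end BinomialSeries

end PowerSeries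

theorem sum_f_eq_zero_general (m n : ℕ) (hm : 0 < m) (hn : 0 < n)
    (F : PowerSeries (MvPolynomial (Fin n) ℂ))
    (hF : F = ∏ j : Fin n,
      fpow (-(PowerSeries.C (MvPolynomial.X j) * PowerSeries.X))
        ((m : ℚ) / n))
    (B : Fin n → PowerSeries (MvPolynomial (Fin n) ℂ))
    (hB : ∀ i, B i = PowerSeries.invOfUnit
      (1 - PowerSeries.C (MvPolynomial.X i) * PowerSeries.X) 1 * F)
    (f : Fin n → MvPolynomial (Fin n) ℂ) (hf : ∀ i, f i = PowerSeries.coeff m (B i)) :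
    ∑ i : Fin n, f i = 0 := by
  simp only [hf, hB, hF]
  refine sum_coeff_invOfUnit_mul_prod_fpow MvPolynomial.X hm.ne' ?_
  rw [Fintype.card_fin]
  exact mul_div_cancel₀ _ (Nat.cast_ne_zero.mpr hn.ne')

/-- With `f_i = Coef_m[(1 - z x_i)⁻¹ ∏ j, (1 - z x_j)^{m/n}]`, one has `∑ i, f_i = 0`. -/
theorem sum_f_eq_zero (m n : ℕ) (hm : 0 < m) (hn : 0 < n) (hmn : Nat.Coprime m n)
    (F : PowerSeries (MvPolynomial (Fin n) ℂ))
    (hF : F = ∏ j : Fin n,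
      fpow (-(PowerSeries.C (MvPolynomial.X j) * PowerSeries.X))
        ((m : ℚ) / n))
    (B : Fin n → PowerSeries (MvPolynomial (Fin n) ℂ))
    (hB : ∀ i, B i = PowerSeries.invOfUnit
      (1 - PowerSeries.C (MvPolynomial.X i) * PowerSeries.X) 1 * F)
    (f : Fin n → MvPolynomial (Fin n) ℂ) (hf : ∀ i, f i = PowerSeries.coeff m (B i)) :
    ∑ i : Fin n, f i = 0 :=
  sum_f_eq_zero_general m n hm hn F hF B hB f hf
end

section
/- Let n = 3, m = 4, and let J ⊂ ℚ[u_2, u_3] be the ideal generated by u_2·u_3 and 2u_3² - (4/9)u_2³ (equivalently by u_2 u_3 and 9u_3² - 2u_2³). Then the quotient ring ℚ[u_2,u_3]/J is a 5-dimensional vector space over ℚ with basis given by the images of 1, u_2, u_2², u_2³, u_3. -/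
/-!
Write `x, y` for the images of `u₂, u₃`. The relations give `xy = 0` and `y² = (2/9)x³`, hence
`x⁴ = (9/2) x y² = 0`, so the span of `1, x, x², x³, y` is stable under multiplication by `x` and
`y` and is therefore everything. For independence, the coefficients of `1, u₂, u₂², u₃` and the
functional `coeff_{u₂³} + (2/9) coeff_{u₃²}` vanish on `J` and are dual to the five monomials:
no monomial of a generator divides `1, u₂, u₂², u₃`, and a multiple `q (2u₃² - (4/9)u₂³)`
contributes `-(4/9) q(0)` at `u₂³` and `2 q(0)` at `u₃²`, which the weight `2/9` cancels.
-/

open MvPolynomial Finsupp Submodule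

theorem Ideal.Quotient.linearIndependent_mk_comp {K A M ι : Type*} [CommRing K] [CommRing A]
    [Algebra K A] [AddCommGroup M] [Module K M] {I : Ideal A} {v : ι → A} (ψ : A →ₗ[K] M)
    (hψ : ∀ a ∈ I, ψ a = 0) (hv : LinearIndependent K (ψ ∘ v)) :
    LinearIndependent K (Ideal.Quotient.mk I ∘ v) :=
  hv.of_comp ((I.restrictScalars K).liftQ ψ hψ ∘ₗ
    (Submodule.Quotient.restrictScalarsEquiv K I).symm.toLinearMap)

theorem MvPolynomial.quotient_submodule_eq_top_of_mul_X_mem {σ K : Type*} [CommRing K]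
    {I : Ideal (MvPolynomial σ K)} (S : Submodule K (MvPolynomial σ K ⧸ I)) (h1 : 1 ∈ S)
    (hX : ∀ i, ∀ s ∈ S, s * Ideal.Quotient.mk I (X i) ∈ S) : S = ⊤ := by
  refine eq_top_iff.mpr ?_
  rintro q -
  obtain ⟨p, rfl⟩ := Ideal.Quotient.mk_surjective q
  induction p using MvPolynomial.induction_on with
  | C a =>
    rw [← algebraMap_eq, Ideal.Quotient.mk_algebraMap, Algebra.algebraMap_eq_smul_one]
    exact S.smul_mem a h1
  | add p q hp hq => exact map_add (Ideal.Quotient.mk I) p q ▸ S.add_mem hp hq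
  | mul_X p i hp => exact (map_mul (Ideal.Quotient.mk I) p (X i)).symm ▸ hX i _ hp

theorem mul_mem_span_of_mul_eq_zero_of_sq_eq {A : Type*} [CommRing A] [Algebra ℚ A] {x y : A}
    (hxy : x * y = 0) (hy : y ^ 2 = (2 / 9 : ℚ) • x ^ 3) :
    ∀ z ∈ ({x, y} : Set A), ∀ s ∈ span ℚ (Set.range ![1, x, x ^ 2, x ^ 3, y]),
      s * z ∈ span ℚ (Set.range ![1, x, x ^ 2, x ^ 3, y]) := by
  have hxy' (k : ℕ) : x ^ (k + 1) * y = 0 := by rw [pow_succ, mul_assoc, hxy, mul_zero]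
  have hx3 : x ^ 3 = (9 / 2 : ℚ) • y ^ 2 := by
    rw [hy, smul_smul]; norm_num
  have hx : x ^ 4 = 0 := by
    rw [pow_succ', hx3, mul_smul_comm, pow_two, ← mul_assoc, hxy, zero_mul, smul_zero]
  intro z hz s hs
  refine span_le (p := (span ℚ _).comap (LinearMap.mulRight ℚ z)) |>.mpr ?_ hs
  rintro _ ⟨j, rfl⟩
  obtain h | h := hz <;> subst z <;> fin_cases j <;>
    simp [← pow_two, ← pow_succ, hx, hxy, hxy', mul_comm y x, hy]
  all_goals first | (apply smul_mem; apply subset_span; simp) | (apply subset_span; simp)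

noncomputable def basisCoord34 : MvPolynomial (Fin 2) ℚ →ₗ[ℚ] Fin 5 → ℚ :=
  LinearMap.pi ![lcoeff ℚ 0, lcoeff ℚ (single 0 1), lcoeff ℚ (single 0 2),
    lcoeff ℚ (single 0 3) + (2 / 9 : ℚ) • lcoeff ℚ (single 1 2), lcoeff ℚ (single 1 1)]

theorem basisCoord34_eq_zero_of_mem {a : MvPolynomial (Fin 2) ℚ}
    (ha : a ∈ Ideal.span {X 0 * X 1, 2 * X 1 ^ 2 - C (4 / 9) * X 0 ^ 3}) :
    basisCoord34 a = 0 := by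
  obtain ⟨p, q, rfl⟩ := Ideal.mem_span_pair.mp ha
  have hg₁ : (X 0 * X 1 : MvPolynomial (Fin 2) ℚ) = monomial (single 0 1 + single 1 1) 1 := by
    rw [X, X, monomial_mul, one_mul]
  have hg₂ : (2 * X 1 ^ 2 - C (4 / 9) * X 0 ^ 3 : MvPolynomial (Fin 2) ℚ) =
      monomial (single 1 2) 2 - monomial (single 0 3) (4 / 9) := by
    rw [← C_mul_X_pow_eq_monomial, ← C_mul_X_pow_eq_monomial, map_ofNat]
  funext j
  fin_cases j <;>
    simp [basisCoord34, hg₁, hg₂, mul_sub, coeff_mul_monomial', Finsupp.le_def, Fin.forall_fin_two]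
  ring

theorem basisCoord34_comp :
    basisCoord34 ∘ ![1, X 0, X 0 ^ 2, X 0 ^ 3, X 1] = Pi.basisFun ℚ (Fin 5) := by
  funext i j
  fin_cases i <;> fin_cases j <;>
    simp [basisCoord34, coeff_X_pow, coeff_X, coeff_one, Finsupp.ext_iff, Fin.forall_fin_two]

theorem quotient_span_relations (J : Ideal (MvPolynomial (Fin 2) ℚ))
    (hJ : J = Ideal.span {X 0 * X 1, 2 * X 1 ^ 2 - C (4 / 9 : ℚ) * X 0 ^ 3}) :
    Ideal.Quotient.mk J (X 0) * Ideal.Quotient.mk J (X 1) = 0 ∧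
      Ideal.Quotient.mk J (X 1) ^ 2 = (2 / 9 : ℚ) • Ideal.Quotient.mk J (X 0) ^ 3 := by
  refine ⟨?_, ?_⟩
  · rw [← map_mul, Ideal.Quotient.eq_zero_iff_mem, hJ]
    exact Ideal.subset_span (Set.mem_insert _ _)
  · have h : Ideal.Quotient.mkₐ ℚ J ((2 : ℚ) • X 1 ^ 2 - (4 / 9 : ℚ) • X 0 ^ 3) = 0 := by
      rw [Ideal.Quotient.mkₐ_eq_mk, Ideal.Quotient.eq_zero_iff_mem, smul_eq_C_mul, smul_eq_C_mul,
        map_ofNat, hJ]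
      exact Ideal.subset_span (Set.mem_insert_of_mem _ rfl)
    simp only [map_sub, map_smul, map_pow, Ideal.Quotient.mkₐ_eq_mk] at h
    linear_combination (norm := module) (1 / 2 : ℚ) • h

/-- For `J = (u₂u₃, 2u₃² - (4/9)u₂³) ⊂ ℚ[u₂,u₃]`, the quotient `ℚ[u₂,u₃]/J` is a
5-dimensional `ℚ`-vector space with basis the images of `1, u₂, u₂², u₂³, u₃`. -/
theorem quotient_basis_34
    (J : Ideal (MvPolynomial (Fin 2) ℚ))
    (hJ : J = Ideal.span {MvPolynomial.X 0 * MvPolynomial.X 1,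
      2 * MvPolynomial.X 1 ^ 2 - MvPolynomial.C (4 / 9 : ℚ) * MvPolynomial.X 0 ^ 3}) :
    ∃ b : Module.Basis (Fin 5) ℚ (MvPolynomial (Fin 2) ℚ ⧸ J),
      ∀ i, b i = Ideal.Quotient.mk J
        (![1, MvPolynomial.X 0, MvPolynomial.X 0 ^ 2, MvPolynomial.X 0 ^ 3,
           MvPolynomial.X 1] i) := by
  obtain ⟨hxy, hy⟩ := quotient_span_relations J hJ
  set x := Ideal.Quotient.mk J (X 0)
  set y := Ideal.Quotient.mk J (X 1)
  have hv : Ideal.Quotient.mk J ∘ ![1, X 0, X 0 ^ 2, X 0 ^ 3, X 1] = ![1, x, x ^ 2, x ^ 3, y] := by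
    funext i
    fin_cases i <;> simp [x, y]
  have hli : LinearIndependent ℚ (Ideal.Quotient.mk J ∘ ![1, X 0, X 0 ^ 2, X 0 ^ 3, X 1]) :=
    Ideal.Quotient.linearIndependent_mk_comp basisCoord34
      (fun _ ha => basisCoord34_eq_zero_of_mem (hJ ▸ ha))
      (basisCoord34_comp ▸ (Pi.basisFun ℚ (Fin 5)).linearIndependent)
  have hsp : span ℚ (Set.range ![1, x, x ^ 2, x ^ 3, y]) = ⊤ :=
    quotient_submodule_eq_top_of_mul_X_mem _ (subset_span ⟨0, rfl⟩) fun i =>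
      mul_mem_span_of_mul_eq_zero_of_sq_eq hxy hy _ (by fin_cases i <;> simp [x, y])
  exact ⟨.mk hli (hv ▸ hsp.ge), fun i => Module.Basis.mk_apply _ _ i⟩
end
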